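/- Let α > 2 and ω > 0. Then E*(ω) ≤ inf{ (ω²/2) I(x) + U(x) : K_ω(x) > 0 }; in fact for every configuration x with K_ω(x) > 0 one has the strict inequality (ω²/2) I(x) + U(x) > E*(ω). (Proof by scaling: there exists 0 < λ* < 1 with K_ω(λ* x) = 0, and E_ω(x) > E_ω(λ* x) ≥ E*(ω).) -/

import Mathlib

/-! Under `x ↦ λ x` the inertia scales by `λ²` and the potential by `λ^(-α)`. If `K_ω(x) > 0`,
then `U(x) < 0` (a nonzero balanced configuration has two bodies), and
`λ* = (-α U(x) / (ω² I(x)))^(1/(α+2)) ∈ (0, 1)` solves `K_ω(λ* x) = 0`; passing from `x` to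
`λ* x` strictly lowers both terms of `E_ω`. On `K_ω = 0` one has `E_ω = (1/2 - 1/α) ω² I ≥ 0`,
so `E*(ω)` is an honest infimum. When `K_ω > 0` has no admissible point its `sInf` is `0`, and
`E*(ω) ≤ 0` since a point of `K_ω = 0` with `E_ω > 0` would, doubled, have `K_ω > 0`. -/
namespace NBodyPaper

open Real

noncomputable section

abbrev E3 := EuclideanSpace ℝ (Fin 3)

variable {N : ℕ}

/-- The α-homogeneous potential `U(x) = -∑_{i<j} m_i m_j / |x_i - x_j|^α`. -/
def pot (α : ℝ) (m : Fin N → ℝ) (q : Fin N → E3) : ℝ :=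
  -∑ i : Fin N, ∑ j ∈ Finset.univ.filter (fun j => i < j), m i * m j / ‖q i - q j‖ ^ α

/-- Moment of inertia `I(x) = ∑ m_i |x_i|²`. -/
def inertia (m : Fin N → ℝ) (q : Fin N → E3) : ℝ := ∑ i, m i * ‖q i‖ ^ 2

/-- Collision-free configuration. -/
def OffDiag (q : Fin N → E3) : Prop := ∀ i j, i ≠ j → q i ≠ q j

/-- Center of mass at the origin. -/
def comZero (m : Fin N → ℝ) (q : Fin N → E3) : Prop := ∑ i, m i • q i = 0

/-- The threshold function `K_ω(x) = ω² I(x) + α U(x)`. -/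
def Kfun (α : ℝ) (m : Fin N → ℝ) (ω : ℝ) (q : Fin N → E3) : ℝ :=
  ω ^ 2 * inertia m q + α * pot α m q

/-- `E_ω(x) = (ω²/2) I(x) + U(x)`. -/
def Eomega (α : ℝ) (m : Fin N → ℝ) (ω : ℝ) (q : Fin N → E3) : ℝ :=
  ω ^ 2 / 2 * inertia m q + pot α m q

/-- The excited energy `E*(ω) = inf { E_ω(x) : K_ω(x) = 0 }`, the infimum taken over
collision-free configurations with center of mass zero. -/
def Estar (α : ℝ) (m : Fin N → ℝ) (ω : ℝ) : ℝ :=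
  sInf {e : ℝ | ∃ q : Fin N → E3, OffDiag q ∧ comZero m q ∧ Kfun α m ω q = 0 ∧ e = Eomega α m ω q}

open Finset

lemma inertia_nonneg {m : Fin N → ℝ} (hm : ∀ i, 0 ≤ m i) (q : Fin N → E3) :
    0 ≤ inertia m q :=
  sum_nonneg fun i _ => mul_nonneg (hm i) (sq_nonneg _)

lemma pot_nonpos (α : ℝ) {m : Fin N → ℝ} (hm : ∀ i, 0 ≤ m i) (q : Fin N → E3) :
    pot α m q ≤ 0 :=
  neg_nonpos.mpr <| sum_nonneg fun i _ => sum_nonneg fun j _ =>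
    div_nonneg (mul_nonneg (hm i) (hm j)) (rpow_nonneg (norm_nonneg _) _)

lemma pot_neg_of_lt (α : ℝ) {m : Fin N → ℝ} (hm : ∀ i, 0 < m i) {q : Fin N → E3}
    (hq : OffDiag q) {i j : Fin N} (hij : i < j) : pot α m q < 0 := by
  have hterm : ∀ a b, 0 ≤ m a * m b / ‖q a - q b‖ ^ α := fun a b =>
    div_nonneg (mul_nonneg (hm a).le (hm b).le) (rpow_nonneg (norm_nonneg _) _)
  refine neg_neg_iff_pos.mpr <| sum_pos' (fun a _ => sum_nonneg fun b _ => hterm a b)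
    ⟨i, mem_univ i, sum_pos' (fun b _ => hterm i b) ⟨j, by simpa using hij, ?_⟩⟩
  exact div_pos (mul_pos (hm i) (hm j))
    (rpow_pos_of_pos (norm_pos_iff.mpr (sub_ne_zero.mpr (hq i j hij.ne))) α)

lemma exists_ne_of_comZero {m : Fin N → ℝ} (hm : ∀ i, 0 < m i) {q : Fin N → E3}
    (hq : comZero m q) {i : Fin N} (hi : q i ≠ 0) : ∃ j, j ≠ i := by
  by_contra! h
  rw [comZero, sum_eq_single_of_mem i (mem_univ i) fun j _ hj => absurd (h j) hj] at hq
  exact hi ((smul_eq_zero.mp hq).resolve_left (hm i).ne')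

lemma pot_neg_of_inertia_pos (α : ℝ) {m : Fin N → ℝ} (hm : ∀ i, 0 < m i) {q : Fin N → E3}
    (hod : OffDiag q) (hcom : comZero m q) (hI : 0 < inertia m q) : pot α m q < 0 := by
  obtain ⟨i, hi⟩ : ∃ i, q i ≠ 0 := by
    by_contra! h
    simp [inertia, h] at hI
  obtain ⟨j, hji⟩ := exists_ne_of_comZero hm hcom hi
  exact (lt_or_gt_of_ne hji).elim (pot_neg_of_lt α hm hod) (pot_neg_of_lt α hm hod)

lemma OffDiag.smul {c : ℝ} (hc : c ≠ 0) {q : Fin N → E3} (hq : OffDiag q) :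
    OffDiag (c • q) := fun i j hij h =>
  hq i j hij (smul_right_injective E3 hc h)

lemma comZero.smul {m : Fin N → ℝ} (c : ℝ) {q : Fin N → E3} (hq : comZero m q) :
    comZero m (c • q) := by
  unfold comZero at *
  simp_rw [Pi.smul_apply, smul_comm (m _) c, ← Finset.smul_sum, hq, smul_zero]

lemma inertia_smul (m : Fin N → ℝ) (c : ℝ) (q : Fin N → E3) :
    inertia m (c • q) = c ^ 2 * inertia m q := by
  simp_rw [inertia, mul_sum, Pi.smul_apply, norm_smul, norm_eq_abs, mul_pow, sq_abs]
  exact sum_congr rfl fun i _ => by ring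

lemma pot_smul (α : ℝ) (m : Fin N → ℝ) {c : ℝ} (hc : 0 ≤ c) (q : Fin N → E3) :
    pot α m (c • q) = (c ^ α)⁻¹ * pot α m q := by
  simp_rw [pot, mul_neg, mul_sum, Pi.smul_apply, ← smul_sub, norm_smul, norm_eq_abs,
    abs_of_nonneg hc, mul_rpow hc (norm_nonneg _)]
  congr 1
  exact sum_congr rfl fun i _ => sum_congr rfl fun j _ => by field_simp

lemma Kfun_smul (α : ℝ) (m : Fin N → ℝ) (ω : ℝ) {c : ℝ} (hc : 0 ≤ c) (q : Fin N → E3) :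
    Kfun α m ω (c • q) = c ^ 2 * (ω ^ 2 * inertia m q) + (c ^ α)⁻¹ * (α * pot α m q) := by
  rw [Kfun, inertia_smul, pot_smul α m hc]
  ring

lemma Eomega_smul (α : ℝ) (m : Fin N → ℝ) (ω : ℝ) {c : ℝ} (hc : 0 ≤ c) (q : Fin N → E3) :
    Eomega α m ω (c • q) = c ^ 2 * (ω ^ 2 / 2 * inertia m q) + (c ^ α)⁻¹ * pot α m q := by
  rw [Eomega, inertia_smul, pot_smul α m hc]
  ring

lemma Eomega_eq_of_Kfun_eq_zero {α ω : ℝ} (hα : α ≠ 0) {m : Fin N → ℝ} {q : Fin N → E3}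
    (hK : Kfun α m ω q = 0) : Eomega α m ω q = (1 / 2 - 1 / α) * (ω ^ 2 * inertia m q) := by
  have hU : pot α m q = -(ω ^ 2 * inertia m q) / α := by
    rw [Kfun] at hK
    field_simp
    linarith
  rw [Eomega, hU]
  ring

lemma Estar_le_Eomega {α ω : ℝ} (hα : 2 ≤ α) {m : Fin N → ℝ} (hm : ∀ i, 0 ≤ m i)
    {q : Fin N → E3} (hod : OffDiag q) (hcom : comZero m q) (hK : Kfun α m ω q = 0) :
    Estar α m ω ≤ Eomega α m ω q := by
  refine csInf_le ⟨0, ?_⟩ ⟨q, hod, hcom, hK, rfl⟩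
  rintro _ ⟨p, -, -, hKp, rfl⟩
  rw [Eomega_eq_of_Kfun_eq_zero (by linarith) hKp]
  have : 1 / α ≤ 1 / 2 := one_div_le_one_div_of_le two_pos hα
  exact mul_nonneg (by linarith) (mul_nonneg (sq_nonneg ω) (inertia_nonneg hm p))

/-- The root `l = (b / a) ^ (1 / (α + 2))` of `l² a = l^(-α) b`. -/
lemma exists_sq_mul_eq_inv_rpow_mul {α a b : ℝ} (hα : 0 < α) (ha : 0 < a) (hb : 0 < b)
    (hba : b < a) : ∃ l : ℝ, 0 < l ∧ l < 1 ∧ l ^ 2 * a = (l ^ α)⁻¹ * b := by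
  refine ⟨(b / a) ^ (α + 2)⁻¹, ?_⟩
  have hc : 0 < b / a := div_pos hb ha
  set l := (b / a) ^ (α + 2)⁻¹
  have hpow : l ^ 2 * l ^ α = b / a := by
    rw [← rpow_natCast, ← rpow_mul hc.le, ← rpow_mul hc.le, ← rpow_add hc,
      ← mul_add, Nat.cast_ofNat, add_comm 2 α, inv_mul_cancel₀ (by positivity), rpow_one]
  have hlα : 0 < l ^ α := rpow_pos_of_pos (rpow_pos_of_pos hc _) α
  refine ⟨rpow_pos_of_pos hc _, rpow_lt_one hc.le ((div_lt_one ha).mpr hba) (by positivity), ?_⟩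
  rw [eq_inv_mul_iff_mul_eq₀ hlα.ne', ← mul_assoc, mul_comm (l ^ α), hpow,
    div_mul_cancel₀ _ ha.ne']

theorem Estar_lt_Eomega_of_Kfun_pos {α ω : ℝ} (hα : 2 ≤ α) {m : Fin N → ℝ}
    (hm : ∀ i, 0 < m i) {x : Fin N → E3} (hod : OffDiag x) (hcom : comZero m x)
    (hK : 0 < Kfun α m ω x) : Estar α m ω < Eomega α m ω x := by
  have hα0 : 0 < α := by linarith
  have hm0 : ∀ i, 0 ≤ m i := fun i => (hm i).le
  have hUle := pot_nonpos α hm0 x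
  rw [Kfun] at hK
  have hωI : 0 < ω ^ 2 * inertia m x := by nlinarith
  have hI : 0 < inertia m x := pos_of_mul_pos_right hωI (sq_nonneg ω)
  have hU : pot α m x < 0 := pot_neg_of_inertia_pos α hm hod hcom hI
  obtain ⟨l, hl0, hl1, hl⟩ := exists_sq_mul_eq_inv_rpow_mul hα0 hωI
    (mul_pos hα0 (neg_pos.mpr hU)) (by linarith)
  have hKl : Kfun α m ω (l • x) = 0 := by
    rw [Kfun_smul α m ω hl0.le, hl]
    ring
  have hEl : Eomega α m ω (l • x) < Eomega α m ω x := by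
    have hsq : l ^ 2 < 1 := pow_lt_one₀ hl0.le hl1 two_ne_zero
    have hinv : 1 < (l ^ α)⁻¹ := one_lt_inv₀ (rpow_pos_of_pos hl0 α) |>.mpr
      (rpow_lt_one hl0.le hl1 hα0)
    rw [Eomega_smul α m ω hl0.le, Eomega]
    nlinarith
  exact (Estar_le_Eomega hα hm0 (hod.smul hl0.ne') (hcom.smul l) hKl).trans_lt hEl

lemma exists_Kfun_pos_of_Estar_pos {α ω : ℝ} (hα : 2 ≤ α) {m : Fin N → ℝ}
    (hm : ∀ i, 0 ≤ m i) (hE : 0 < Estar α m ω) :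
    ∃ x : Fin N → E3, OffDiag x ∧ comZero m x ∧ 0 < Kfun α m ω x := by
  obtain ⟨_, q, hod, hcom, hK, rfl⟩ : Set.Nonempty {e : ℝ | ∃ q : Fin N → E3,
      OffDiag q ∧ comZero m q ∧ Kfun α m ω q = 0 ∧ e = Eomega α m ω q} := by
    by_contra! h
    rw [Estar, h, Real.sInf_empty] at hE
    exact hE.false
  have hωI : 0 < ω ^ 2 * inertia m q := by
    have := hE.trans_le (Estar_le_Eomega hα hm hod hcom hK)
    rw [Eomega_eq_of_Kfun_eq_zero (by linarith) hK] at this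
    exact pos_of_mul_pos_right this (by linarith [one_div_le_one_div_of_le two_pos hα])
  refine ⟨(2 : ℝ) • q, hod.smul two_ne_zero, hcom.smul 2, ?_⟩
  have hinv : ((2 : ℝ) ^ α)⁻¹ ≤ 1 := inv_le_one_of_one_le₀ (one_le_rpow one_le_two (by linarith))
  rw [Kfun_smul α m ω zero_le_two, show α * pot α m q = -(ω ^ 2 * inertia m q) by
    rw [Kfun] at hK; linarith]
  nlinarith

theorem Estar_le_of_Kfun_pos {N : ℕ} (α ω : ℝ) (hα : 2 < α)
    (m : Fin N → ℝ) (hm : ∀ i, 0 < m i) :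
    (∀ x : Fin N → E3, OffDiag x → comZero m x → 0 < Kfun α m ω x →
      Estar α m ω < Eomega α m ω x) ∧
    Estar α m ω ≤ sInf {e : ℝ | ∃ x : Fin N → E3,
      OffDiag x ∧ comZero m x ∧ 0 < Kfun α m ω x ∧ e = Eomega α m ω x} := by
  have above : ∀ x : Fin N → E3, OffDiag x → comZero m x → 0 < Kfun α m ω x →
      Estar α m ω < Eomega α m ω x :=
    fun x hod hcom hK => Estar_lt_Eomega_of_Kfun_pos hα.le hm hod hcom hK
  refine ⟨above, ?_⟩
  set T := {e : ℝ | ∃ x : Fin N → E3,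
    OffDiag x ∧ comZero m x ∧ 0 < Kfun α m ω x ∧ e = Eomega α m ω x}
  obtain hT | hT := T.eq_empty_or_nonempty
  · rw [hT, Real.sInf_empty]
    by_contra! hE
    obtain ⟨x, hod, hcom, hK⟩ := exists_Kfun_pos_of_Estar_pos hα.le (fun i => (hm i).le) hE
    exact hT.subset ⟨x, hod, hcom, hK, rfl⟩
  · exact le_csInf hT fun _ ⟨x, hod, hcom, hK, he⟩ => he ▸ (above x hod hcom hK).le

end
end NBodyPaper
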